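/- For q ∈ ℝ^K and λ > 0, the derivative with respect to λ of g(λ) = λ · log((1/K) ∑_k exp(q_k/λ)) is g′(λ) = −KL(p(λ), 1/K), where p(λ)_k = exp(q_k/λ)/∑_j exp(q_j/λ) and KL(p, 1/K) = ∑_k p_k log(K p_k). In particular g′(λ) ≤ 0, with equality iff q has all equal entries, confirming monotonicity of the LDR-KL loss in λ. -/

import Mathlib

/-!
With `x = q / λ` and `S = ∑ exp x_k`, the product rule gives `g'(λ) = log (S / K) - ∑ p_k x_k`,
and since `log (K p_k) = log K + x_k - log S` this is `-∑ p_k log (K p_k)`. For the sign, the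
terms `1 - K p_k` sum to zero, so `K ∑ p_k log (K p_k) = ∑ klFun (K p_k)`, where
`klFun t = t log t + 1 - t` is nonnegative and vanishes only at `t = 1`. Hence the divergence
vanishes iff the softmax is uniform, i.e. iff all `q_k / λ` coincide.
-/

open Real Finset InformationTheory

noncomputable def softmax {ι : Type*} [Fintype ι] (x : ι → ℝ) (i : ι) : ℝ :=
  exp (x i) / ∑ j, exp (x j)

section Softmax

variable {ι : Type*} [Fintype ι] [Nonempty ι] (x : ι → ℝ)

lemma sum_exp_pos : 0 < ∑ j, exp (x j) :=
  sum_pos (fun _ _ => exp_pos _) univ_nonempty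

lemma softmax_pos (i : ι) : 0 < softmax x i :=
  div_pos (exp_pos _) (sum_exp_pos x)

lemma sum_softmax : ∑ i, softmax x i = 1 := by
  unfold softmax
  rw [← sum_div, div_self (sum_exp_pos x).ne']

lemma sum_exp_mul_softmax (i : ι) : (∑ j, exp (x j)) * softmax x i = exp (x i) :=
  mul_div_cancel₀ _ (sum_exp_pos x).ne'

lemma softmax_eq_softmax_iff {i j : ι} : softmax x i = softmax x j ↔ x i = x j := by
  rw [softmax, softmax, div_left_inj' (sum_exp_pos x).ne', exp_eq_exp]

lemma log_card_mul_softmax (i : ι) :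
    log (Fintype.card ι * softmax x i) = log (Fintype.card ι) + x i - log (∑ j, exp (x j)) := by
  rw [log_mul (by positivity) (softmax_pos x i).ne', softmax,
    log_div (exp_pos _).ne' (sum_exp_pos x).ne', log_exp]
  ring

lemma sum_softmax_mul_log_card_mul_softmax :
    ∑ i, softmax x i * log (Fintype.card ι * softmax x i)
      = log (Fintype.card ι) - log (∑ j, exp (x j)) + ∑ i, softmax x i * x i := by
  simp only [log_card_mul_softmax, mul_add, mul_sub, sum_add_distrib, sum_sub_distrib,
    ← sum_mul, sum_softmax]
  ring

end Softmax

section KL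

variable {ι : Type*} [Fintype ι] {p : ι → ℝ}

lemma card_mul_sum_mul_log_card_mul_eq_sum_klFun (hp : ∑ i, p i = 1) :
    Fintype.card ι * ∑ i, p i * log (Fintype.card ι * p i)
      = ∑ i, klFun (Fintype.card ι * p i) := by
  simp only [klFun_apply, sum_sub_distrib, sum_add_distrib, ← mul_sum, hp, mul_assoc]
  simp

variable [Nonempty ι]

lemma sum_mul_log_card_mul_nonneg (hp0 : ∀ i, 0 ≤ p i) (hp : ∑ i, p i = 1) :
    0 ≤ ∑ i, p i * log (Fintype.card ι * p i) := by
  have hK : (0 : ℝ) < Fintype.card ι := by positivity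
  refine nonneg_of_mul_nonneg_right ?_ hK
  rw [card_mul_sum_mul_log_card_mul_eq_sum_klFun hp]
  exact sum_nonneg fun i _ => klFun_nonneg (mul_nonneg hK.le (hp0 i))

lemma sum_mul_log_card_mul_eq_zero_iff (hp0 : ∀ i, 0 ≤ p i) (hp : ∑ i, p i = 1) :
    ∑ i, p i * log (Fintype.card ι * p i) = 0 ↔ ∀ i, Fintype.card ι * p i = 1 := by
  have hK : (0 : ℝ) < Fintype.card ι := by positivity
  have hklFun_nonneg i : 0 ≤ klFun (Fintype.card ι * p i) :=
    klFun_nonneg (mul_nonneg hK.le (hp0 i))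
  rw [← mul_eq_zero_iff_left hK.ne', card_mul_sum_mul_log_card_mul_eq_sum_klFun hp,
    sum_eq_zero_iff_of_nonneg fun i _ => hklFun_nonneg i]
  simp only [mem_univ, true_implies]
  exact forall_congr' fun i => klFun_eq_zero_iff (mul_nonneg hK.le (hp0 i))

lemma forall_card_mul_eq_one_iff (hp : ∑ i, p i = 1) :
    (∀ i, Fintype.card ι * p i = 1) ↔ ∀ i j, p i = p j := by
  have hK : (Fintype.card ι : ℝ) ≠ 0 := by positivity
  refine ⟨fun h i j => mul_left_cancel₀ hK ((h i).trans (h j).symm), fun h i => ?_⟩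
  rw [← hp, sum_congr rfl fun j _ => h j i, sum_const, card_univ, nsmul_eq_mul]

end KL

section Derivative

variable {ι : Type*} [Fintype ι]

lemma hasDerivAt_sum_exp_div (q : ι → ℝ) {lam : ℝ} (hlam : lam ≠ 0) :
    HasDerivAt (fun l => ∑ k, exp (q k / l)) (-(∑ k, exp (q k / lam) * (q k / lam)) / lam) lam := by
  refine (HasDerivAt.fun_sum (u := univ) fun k _ =>
    ((hasDerivAt_const lam (q k)).fun_div (hasDerivAt_id' lam) hlam).exp).congr_deriv ?_
  rw [neg_div, sum_div, ← sum_neg_distrib]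
  refine sum_congr rfl fun k _ => ?_
  field_simp
  ring

lemma hasDerivAt_mul_log_mean_exp_div [Nonempty ι] (q : ι → ℝ) {lam : ℝ} (hlam : lam ≠ 0) :
    HasDerivAt (fun l => l * log ((1 / Fintype.card ι) * ∑ k, exp (q k / l)))
      (-∑ k, softmax (fun k => q k / lam) k
          * log (Fintype.card ι * softmax (fun k => q k / lam) k)) lam := by
  have hS := sum_exp_pos fun k => q k / lam
  have hK : (0 : ℝ) < Fintype.card ι := by positivity
  refine ((hasDerivAt_id' lam).fun_mul
    (((hasDerivAt_sum_exp_div q hlam).const_mul (1 / (Fintype.card ι : ℝ))).log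
      (by positivity))).congr_deriv ?_
  have hsum : ∑ k, exp (q k / lam) * (q k / lam)
      = (∑ k, exp (q k / lam)) * ∑ k, softmax (fun k => q k / lam) k * (q k / lam) := by
    simp only [mul_sum, ← mul_assoc, sum_exp_mul_softmax]
  rw [sum_softmax_mul_log_card_mul_softmax, hsum, log_mul (by positivity) hS.ne', one_div, log_inv]
  field_simp
  ring

end Derivative

/-- The derivative in λ of `g(λ) = λ log((1/K) ∑ exp(q_k/λ))` is `−KL(p(λ), 1/K)` where
`p(λ)` is the softmax of `q` at temperature λ; this derivative is ≤ 0, with equality iff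
all entries of `q` are equal. -/
theorem ldr_kl_deriv_is_neg_kl (K : ℕ) (hK : 0 < K) (q : Fin K → ℝ)
    (lam : ℝ) (hlam : 0 < lam)
    (p : Fin K → ℝ)
    (hp : p = fun k => Real.exp (q k / lam) / ∑ j : Fin K, Real.exp (q j / lam)) :
    HasDerivAt
      (fun l : ℝ => l * Real.log ((1 / (K : ℝ)) * ∑ k : Fin K, Real.exp (q k / l)))
      (-(∑ k : Fin K, p k * Real.log ((K : ℝ) * p k))) lam ∧
    (-(∑ k : Fin K, p k * Real.log ((K : ℝ) * p k)) ≤ 0) ∧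
    ((-(∑ k : Fin K, p k * Real.log ((K : ℝ) * p k)) = 0) ↔ ∀ i j : Fin K, q i = q j) := by
  have : Nonempty (Fin K) := ⟨⟨0, hK⟩⟩
  have hp_softmax : p = softmax fun k => q k / lam := hp
  have hp0 k : 0 ≤ p k := hp_softmax ▸ (softmax_pos _ k).le
  have hp1 : ∑ k, p k = 1 := hp_softmax ▸ sum_softmax _
  have hK_card : (K : ℝ) = Fintype.card (Fin K) := by rw [Fintype.card_fin]
  rw [hK_card]
  refine ⟨hp_softmax ▸ hasDerivAt_mul_log_mean_exp_div q hlam.ne',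
    neg_nonpos.2 (sum_mul_log_card_mul_nonneg hp0 hp1), ?_⟩
  rw [neg_eq_zero, sum_mul_log_card_mul_eq_zero_iff hp0 hp1, forall_card_mul_eq_one_iff hp1,
    hp_softmax]
  simp only [softmax_eq_softmax_iff, div_left_inj' hlam.ne']
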